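/- For every k ∈ [n] and every permutation σ of [n] with σ(i) > k for all 1 ≤ i ≤ k, define σ' by: σ'(i) = σ(i+k) − k if 1 ≤ i ≤ n−k and σ(i+k) > k; σ'(i) = σ(i+k) + n − k if 1 ≤ i ≤ n−k and σ(i+k) ≤ k; and σ'(i) = σ(i+k−n) − k if n−k+1 ≤ i ≤ n. Then σ' is a permutation of [n] with σ'(n+1−i) < n+1−k for all 1 ≤ i ≤ k, the map σ ↦ σ' is a bijection between these two sets, and it preserves both wex and cr: wex(σ') = wex(σ) and cr(σ') = cr(σ). -/

import Mathlib

/-- Number of weak excedances of a permutation of `[n]` (0-indexed: `i ≤ σ i`). -/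
def wex {n : ℕ} (σ : Equiv.Perm (Fin n)) : ℕ :=
  (Finset.univ.filter (fun i : Fin n => (i : ℕ) ≤ (σ i : ℕ))).card

/-- Number of crossings of a permutation of `[n]`. -/
def cr {n : ℕ} (σ : Equiv.Perm (Fin n)) : ℕ :=
  (∑ i : Fin n,
      (Finset.univ.filter
        (fun j : Fin n => (j : ℕ) < (i : ℕ) ∧ (i : ℕ) ≤ (σ j : ℕ) ∧ (σ j : ℕ) < (σ i : ℕ))).card)
  + ∑ i : Fin n,
      (Finset.univ.filter
        (fun j : Fin n => (i : ℕ) < (j : ℕ) ∧ (σ j : ℕ) < (i : ℕ) ∧ (σ i : ℕ) < (σ j : ℕ))).card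

/-!
`Φ_k` is conjugation by the `k`-th power of the cyclic rotation `i ↦ i + 1` of `Fin n`, so it
suffices that `wex` and `cr` are invariant under conjugation by the rotation itself. That
conjugation moves the point `0` to the end: the arc leaving `0` and the arc entering `0` switch
between upper and lower arcs, while all other arcs keep their relative positions. The crossings
gained and lost are then counted by arcs jumping over a cut at `τ⁻¹ 0` or at `τ 0`, and a
permutation carries as many points across a cut in one direction as in the other.
-/

open Finset Equiv

theorem Equiv.Perm.sum_ite_and_not_apply {α : Type*} [Fintype α] (σ : Perm α) (P : α → Prop)
    [DecidablePred P] :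
    ∑ x, (if P x ∧ ¬P (σ x) then 1 else 0) = ∑ x, if ¬P x ∧ P (σ x) then 1 else 0 := by
  have hperm : ∑ x, (if P (σ x) then 1 else 0) = ∑ x, if P x then 1 else 0 :=
    Equiv.sum_comp σ fun x => if P x then 1 else 0
  have hsplit (x : α) : (if P x then 1 else 0) + (if ¬P x ∧ P (σ x) then 1 else 0)
      = (if P (σ x) then 1 else 0) + (if P x ∧ ¬P (σ x) then 1 else 0) := by
    by_cases P x <;> by_cases P (σ x) <;> simp [*]
  have hsum := sum_congr rfl fun x (_ : x ∈ univ) => hsplit x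
  simp only [sum_add_distrib] at hsum
  omega

theorem Equiv.Perm.conj_apply_inv_apply {α : Type*} (e τ : Perm α) (x : α) :
    (e⁻¹ * τ * e) (e⁻¹ x) = e⁻¹ (τ x) := by
  simp [Perm.mul_apply]

theorem apply_conj_pow_eq {G α : Type*} [Group G] {f : G → α} {g : G}
    (hf : ∀ x, f (g⁻¹ * x * g) = f x) (k : ℕ) (x : G) : f ((g ^ k)⁻¹ * x * g ^ k) = f x := by
  induction k with
  | zero => simp
  | succ k ih =>
    calc f ((g ^ (k + 1))⁻¹ * x * g ^ (k + 1)) = f (g⁻¹ * ((g ^ k)⁻¹ * x * g ^ k) * g) := by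
          congr 1; group
      _ = f x := by rw [hf, ih]

/-- `x - k` modulo `n`, for `x < n` and `k ≤ n`. -/
def cycSub (n k x : ℕ) : ℕ := if k ≤ x then x - k else x + n - k

abbrev IsCrossing (i j a b : ℕ) : Prop := j < i ∧ i ≤ b ∧ b < a ∨ a < b ∧ b < i ∧ i < j

section

variable {n : ℕ}

theorem add_mod_lt_of_sub_le {i k : ℕ} (hi : i < n) (h : n - k ≤ i) : (i + k) % n < k := by
  rcases le_or_gt k n with hk | hk
  · rw [Nat.mod_eq_sub_mod (by omega), Nat.mod_eq_of_lt (by omega)]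
    omega
  · exact (Nat.mod_lt _ (by omega)).trans hk

theorem val_finRotate_pow_apply (k : ℕ) (i : Fin n) :
    ((finRotate n ^ k) i : ℕ) = (i + k) % n := by
  induction k with
  | zero => simp [Nat.mod_eq_of_lt i.isLt]
  | succ k ih =>
    have := i.neZero
    rw [pow_succ', Perm.mul_apply, finRotate_apply, Fin.val_add, ih, Fin.val_one', Nat.mod_add_mod,
      Nat.add_mod_mod, add_assoc]

theorem val_finRotate_pow_inv_apply {k : ℕ} (hk : k ≤ n) (y : Fin n) :
    (((finRotate n ^ k)⁻¹ y : Fin n) : ℕ) = cycSub n k y := by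
  have hlt : cycSub n k y < n := by unfold cycSub; split_ifs <;> omega
  suffices (finRotate n ^ k)⁻¹ y = ⟨cycSub n k y, hlt⟩ by rw [this]
  rw [Perm.inv_eq_iff_eq, Fin.ext_iff, val_finRotate_pow_apply]
  unfold cycSub
  split_ifs with h
  · rw [Nat.sub_add_cancel h, Nat.mod_eq_of_lt y.isLt]
  · rw [Nat.sub_add_cancel (by omega), Nat.add_mod_right, Nat.mod_eq_of_lt y.isLt]

theorem wex_eq_sum (σ : Perm (Fin n)) : wex σ = ∑ i : Fin n, if (i : ℕ) ≤ σ i then 1 else 0 :=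
  card_filter _ _

theorem cr_eq_sum_crossing (σ : Perm (Fin n)) :
    cr σ = ∑ i : Fin n, ∑ j : Fin n, if IsCrossing i j (σ i) (σ j) then 1 else 0 := by
  simp only [cr, card_filter, ← sum_add_distrib]
  refine sum_congr rfl fun i _ => sum_congr rfl fun j _ => ?_
  split_ifs <;> omega

/- In the two lemmas below `p` stands for `τ⁻¹ 0` and `q` for `τ 0`. The terms besides the
indicators of the statistic are the row of `p` and the column of `0`; summed, they become cut
counts (`Equiv.Perm.sum_ite_and_not_apply`). -/

theorem weakExc_indicator_cycSub_one {i a p : ℕ} (hi : i < n) (ha : a < n)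
    (hap : a = 0 ↔ i = p) :
    (if cycSub n 1 i ≤ cycSub n 1 a then 1 else 0) + (if i = 0 then 1 else 0)
      = (if i ≤ a then 1 else 0) + (if i = p then 1 else 0) := by
  unfold cycSub
  split_ifs <;> omega

theorem crossing_indicator_cycSub_one {i j a b p q : ℕ} (hi : i < n) (hj : j < n) (ha : a < n)
    (hb : b < n) (hap : a = 0 ↔ i = p) (hbp : b = 0 ↔ j = p) (hiq : i = 0 ↔ a = q)
    (hjq : j = 0 ↔ b = q) :
    (if IsCrossing (cycSub n 1 i) (cycSub n 1 j) (cycSub n 1 a) (cycSub n 1 b) then 1 else 0)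
        + (if i = p ∧ p ≤ j ∧ b < p then 1 else 0) + (if j = 0 ∧ i ≤ q ∧ q < a then 1 else 0)
        + (if i = p ∧ j = 0 then 1 else 0)
      = (if IsCrossing i j a b then 1 else 0)
        + (if i = p ∧ j < p ∧ p ≤ b then 1 else 0) + (if j = 0 ∧ q < i ∧ a ≤ q then 1 else 0)
        + (if i = p ∧ j = p then 1 else 0) := by
  unfold IsCrossing cycSub
  grind (splits := 40)

section Rotation

variable [NeZero n] (τ : Perm (Fin n))

theorem val_finRotate_inv_apply (x : Fin n) :
    (((finRotate n)⁻¹ x : Fin n) : ℕ) = cycSub n 1 x := by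
  simpa using val_finRotate_pow_inv_apply NeZero.one_le x

theorem val_apply_eq_zero_iff (i : Fin n) : (τ i : ℕ) = 0 ↔ (i : ℕ) = (τ⁻¹ 0 : Fin n) := by
  simp [Fin.val_inj, Equiv.eq_symm_apply]

theorem val_eq_zero_iff_val_apply (i : Fin n) : (i : ℕ) = 0 ↔ (τ i : ℕ) = (τ 0 : Fin n) := by
  simp [Fin.val_inj]

theorem wex_conj_finRotate : wex ((finRotate n)⁻¹ * τ * finRotate n) = wex τ := by
  have key := sum_congr rfl fun i (_ : i ∈ univ) =>
    weakExc_indicator_cycSub_one i.isLt (τ i).isLt (val_apply_eq_zero_iff τ i)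
  rw [wex_eq_sum, wex_eq_sum, ← Equiv.sum_comp (finRotate n)⁻¹]
  simp only [sum_add_distrib, Perm.conj_apply_inv_apply, val_finRotate_inv_apply]
    at key ⊢
  simp only [Fin.val_eq_zero_iff, Fin.val_inj, sum_ite_eq', mem_univ, if_true] at key
  omega

theorem cr_conj_finRotate : cr ((finRotate n)⁻¹ * τ * finRotate n) = cr τ := by
  have hreindex (F : Fin n → Fin n → ℕ) :
      ∑ i, ∑ j, F i j = ∑ i, ∑ j, F ((finRotate n)⁻¹ i) ((finRotate n)⁻¹ j) := by
    rw [← Equiv.sum_comp (finRotate n)⁻¹]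
    exact sum_congr rfl fun i _ => (Equiv.sum_comp (finRotate n)⁻¹ _).symm
  have key := sum_congr rfl fun i (_ : i ∈ univ) => sum_congr rfl fun j (_ : j ∈ univ) =>
    crossing_indicator_cycSub_one i.isLt j.isLt (τ i).isLt (τ j).isLt
      (val_apply_eq_zero_iff τ i) (val_apply_eq_zero_iff τ j)
      (val_eq_zero_iff_val_apply τ i) (val_eq_zero_iff_val_apply τ j)
  have hrow := τ.sum_ite_and_not_apply fun x => (x : ℕ) < (τ⁻¹ 0 : Fin n)
  have hcol := τ.sum_ite_and_not_apply fun x => (x : ℕ) ≤ (τ 0 : Fin n)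
  simp only [not_lt, not_le] at hrow hcol
  rw [cr_eq_sum_crossing, cr_eq_sum_crossing, hreindex]
  simp only [sum_add_distrib, Perm.conj_apply_inv_apply, val_finRotate_inv_apply]
    at key ⊢
  simp only [ite_and, sum_ite_irrel, sum_const_zero, Fin.val_eq_zero_iff, Fin.val_inj, sum_ite_eq',
    mem_univ, if_true] at key hrow hcol
  omega

end Rotation

/-- The map `Φ_k`: `cyclicShift n k σ i = σ (i + k) - k`, both taken modulo `n`. -/
def cyclicShift (n k : ℕ) : Perm (Fin n) ≃ Perm (Fin n) where
  toFun σ := (finRotate n ^ k)⁻¹ * σ * finRotate n ^ k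
  invFun τ := finRotate n ^ k * τ * (finRotate n ^ k)⁻¹
  left_inv σ := by group
  right_inv τ := by group

theorem cyclicShift_apply (k : ℕ) (σ : Perm (Fin n)) :
    cyclicShift n k σ = (finRotate n ^ k)⁻¹ * σ * finRotate n ^ k :=
  rfl

theorem val_cyclicShift_apply {k : ℕ} (hk : k ≤ n) (σ : Perm (Fin n)) (i : Fin n) :
    (cyclicShift n k σ i : ℕ) = cycSub n k (σ ((finRotate n ^ k) i)) := by
  rw [cyclicShift_apply, Perm.mul_apply, Perm.mul_apply, val_finRotate_pow_inv_apply hk]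

theorem wex_cyclicShift [NeZero n] (k : ℕ) (σ : Perm (Fin n)) :
    wex (cyclicShift n k σ) = wex σ :=
  apply_conj_pow_eq wex_conj_finRotate k σ

theorem cr_cyclicShift [NeZero n] (k : ℕ) (σ : Perm (Fin n)) : cr (cyclicShift n k σ) = cr σ :=
  apply_conj_pow_eq cr_conj_finRotate k σ

theorem forall_lt_le_iff_cyclicShift {k : ℕ} (hk : k ≤ n) (σ : Perm (Fin n)) :
    (∀ i : Fin n, (i : ℕ) < k → k ≤ σ i) ↔
      ∀ i : Fin n, n - k ≤ i → (cyclicShift n k σ i : ℕ) < n - k := by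
  constructor
  · intro h i hi
    have hσ := h _ <| (val_finRotate_pow_apply k i).symm ▸ add_mod_lt_of_sub_le i.isLt hi
    have := (σ ((finRotate n ^ k) i)).isLt
    rw [val_cyclicShift_apply hk, cycSub, if_pos hσ]
    omega
  · intro h i hi
    have hi' := val_finRotate_pow_inv_apply hk i
    have hσ := h ((finRotate n ^ k)⁻¹ i) (by unfold cycSub at hi'; split_ifs at hi' <;> omega)
    rw [val_cyclicShift_apply hk, Perm.coe_inv, apply_symm_apply] at hσ
    have := (σ i).isLt
    unfold cycSub at hσ
    split_ifs at hσ <;> omega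

def cyclicShiftEquiv {k : ℕ} (hk : k ≤ n) :
    {σ : Perm (Fin n) // ∀ i : Fin n, (i : ℕ) < k → k ≤ (σ i : ℕ)} ≃
      {σ : Perm (Fin n) // ∀ i : Fin n, n - k ≤ (i : ℕ) → (σ i : ℕ) < n - k} :=
  (cyclicShift n k).subtypeEquiv fun σ => forall_lt_le_iff_cyclicShift hk σ

theorem coe_cyclicShiftEquiv_apply {k : ℕ} (hk : k ≤ n) (σ) :
    (cyclicShiftEquiv hk σ : Perm (Fin n)) = cyclicShift n k σ :=
  rfl

end

/-- Everything is written 0-indexed: 1-indexed `i` corresponds to `i-1 : Fin n`. -/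
theorem stmt14 (n k : ℕ) (hk1 : 1 ≤ k) (hkn : k ≤ n) :
    ∃ Φ : {σ : Equiv.Perm (Fin n) // ∀ i : Fin n, (i : ℕ) < k → k ≤ (σ i : ℕ)} →
          {σ : Equiv.Perm (Fin n) // ∀ i : Fin n, n - k ≤ (i : ℕ) → (σ i : ℕ) < n - k},
      Function.Bijective Φ ∧
      (∀ σ : {σ : Equiv.Perm (Fin n) // ∀ i : Fin n, (i : ℕ) < k → k ≤ (σ i : ℕ)},
        ∀ i : Fin n,
          ((Φ σ : Equiv.Perm (Fin n)) i : ℕ) =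
            (let s : ℕ :=
              ((σ : Equiv.Perm (Fin n))
                ⟨((i : ℕ) + k) % n, Nat.mod_lt _ (lt_of_lt_of_le hk1 hkn)⟩ : ℕ);
             if (i : ℕ) < n - k then (if k ≤ s then s - k else s + (n - k)) else s - k)) ∧
      (∀ σ, wex (Φ σ : Equiv.Perm (Fin n)) = wex (σ : Equiv.Perm (Fin n)) ∧
            cr (Φ σ : Equiv.Perm (Fin n)) = cr (σ : Equiv.Perm (Fin n))) := by
  have : NeZero n := ⟨by omega⟩
  refine ⟨cyclicShiftEquiv hkn, Equiv.bijective _, fun σ i => ?_, fun σ => ?_⟩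
  · have hidx : (finRotate n ^ k) i = ⟨(i + k) % n, Nat.mod_lt _ (lt_of_lt_of_le hk1 hkn)⟩ :=
      Fin.ext (val_finRotate_pow_apply k i)
    have hdom := σ.2 ((finRotate n ^ k) i)
    have hmod := add_mod_lt_of_sub_le (k := k) i.isLt
    rw [hidx] at hdom
    rw [coe_cyclicShiftEquiv_apply, val_cyclicShift_apply hkn, hidx]
    simp only [cycSub] at hdom ⊢
    split_ifs <;> omega
  · rw [coe_cyclicShiftEquiv_apply]
    exact ⟨wex_cyclicShift k σ.1, cr_cyclicShift k σ.1⟩
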